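/- arXiv:2009.09194 — 2 statements merged into one kernel-verified Lean document; each statement's English description precedes it below -/
import Mathlib

section
/- Let f = (x² − y³)(y² − x³) ∈ ℂ[x,y] and X = (2x² + (5/2)y³ − (9/2)x³y)∂ₓ + (3xy − 3x²y²)∂_y. Then X·f is divisible by f in ℂ[x,y], i.e. X ∈ Der(log f). -/
open MvPolynomial

/-- The vector field `X = (2x² + (5/2)y³ − (9/2)x³y)∂ₓ + (3xy − 3x²y²)∂_y` is tangent to
the double cusp `{(x² − y³)(y² − x³) = 0}`: `X·f` is divisible by `f`. -/
theorem double_cusp_optimal_vector_field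
    (f a b : MvPolynomial (Fin 2) ℂ)
    (hf : f = (X 0 ^ 2 - X 1 ^ 3) * (X 1 ^ 2 - X 0 ^ 3))
    (ha : a = C 2 * X 0 ^ 2 + C (5 / 2 : ℂ) * X 1 ^ 3 - C (9 / 2 : ℂ) * X 0 ^ 3 * X 1)
    (hb : b = C 3 * X 0 * X 1 - C 3 * X 0 ^ 2 * X 1 ^ 2) :
    f ∣ (a * pderiv 0 f + b * pderiv 1 f) := by
  subst hf ha hb
  refine ⟨C 10 * X 0 - C (45 / 2 : ℂ) * X 0 ^ 2 * X 1, ?_⟩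
  simp only [map_sub, map_mul, map_pow, pderiv_X, pderiv_pow, Derivation.leibniz,
    smul_eq_mul]
  simp [pderiv_X_self, pderiv_X_of_ne]
  rw [show (5/2:ℂ) = 5 * 2⁻¹ by norm_num, show (9/2:ℂ) = 9 * 2⁻¹ by norm_num,
    show (45/2:ℂ) = 45 * 2⁻¹ by norm_num]
  simp only [C_mul, map_ofNat]
  have h : (C (2⁻¹:ℂ) : MvPolynomial (Fin 2) ℂ) * 2 = 1 := by
    rw [show ((2:MvPolynomial (Fin 2) ℂ)) = C 2 from (map_ofNat C 2).symm, ← C_mul]; norm_num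
  linear_combination (X 0 ^ 4 * X 1 ^ 3 + 5 * X 0 * X 1 ^ 5 - 15 * X 0 ^ 2 * X 1 ^ 6
    + 9 * X 0 ^ 5 * X 1 ^ 4) * h
end

section
/- Let f = y⁵ + x⁵ + x⁶ ∈ ℂ[x,y] and X₁ = ((1/5)xy − (1/25)x²y + (6/125)x³y + (36/125)x⁴y)∂ₓ + ((1/5)y² + (216/625)x³y²)∂_y. Then X₁·f is divisible by f in ℂ[x,y], i.e. X₁ ∈ Der(log f). -/
open MvPolynomial

/-- The vector field
`X₁ = ((1/5)xy − (1/25)x²y + (6/125)x³y + (36/125)x⁴y)∂ₓ + ((1/5)y² + (216/625)x³y²)∂_y`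
is tangent to the curve `{y⁵ + x⁵ + x⁶ = 0}`: `X₁·f` is divisible by `f`. -/
theorem five_lines_optimal_vector_field
    (f a b : MvPolynomial (Fin 2) ℂ)
    (hf : f = X 1 ^ 5 + X 0 ^ 5 + X 0 ^ 6)
    (ha : a = C (1 / 5 : ℂ) * X 0 * X 1 - C (1 / 25 : ℂ) * X 0 ^ 2 * X 1
        + C (6 / 125 : ℂ) * X 0 ^ 3 * X 1 + C (36 / 125 : ℂ) * X 0 ^ 4 * X 1)
    (hb : b = C (1 / 5 : ℂ) * X 1 ^ 2 + C (216 / 625 : ℂ) * X 0 ^ 3 * X 1 ^ 2) :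
    f ∣ (a * pderiv 0 f + b * pderiv 1 f) := by
  subst hf ha hb
  refine ⟨X 1 + C (216 / 125 : ℂ) * X 0 ^ 3 * X 1, ?_⟩
  have key : ∀ (n : ℕ), (C ((n : ℂ) / 625) : MvPolynomial (Fin 2) ℂ)
      = (n : MvPolynomial (Fin 2) ℂ) * C ((1:ℂ)/625) := by
    intro n
    rw [← C_eq_coe_nat, ← C_mul]
    congr 1
    field_simp
  have h1 : (C ((1:ℂ) / 5) : MvPolynomial (Fin 2) ℂ) = ((125:ℕ) : MvPolynomial (Fin 2) ℂ) * C ((1:ℂ)/625) := by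
    rw [show (1:ℂ)/5 = ((125:ℕ):ℂ)/625 by norm_num]; exact key 125
  have h2 : (C ((1:ℂ) / 25) : MvPolynomial (Fin 2) ℂ) = ((25:ℕ) : MvPolynomial (Fin 2) ℂ) * C ((1:ℂ)/625) := by
    rw [show (1:ℂ)/25 = ((25:ℕ):ℂ)/625 by norm_num]; exact key 25
  have h3 : (C ((6:ℂ) / 125) : MvPolynomial (Fin 2) ℂ) = ((30:ℕ) : MvPolynomial (Fin 2) ℂ) * C ((1:ℂ)/625) := by
    rw [show (6:ℂ)/125 = ((30:ℕ):ℂ)/625 by norm_num]; exact key 30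
  have h4 : (C ((36:ℂ) / 125) : MvPolynomial (Fin 2) ℂ) = ((180:ℕ) : MvPolynomial (Fin 2) ℂ) * C ((1:ℂ)/625) := by
    rw [show (36:ℂ)/125 = ((180:ℕ):ℂ)/625 by norm_num]; exact key 180
  have h5 : (C ((216:ℂ) / 625) : MvPolynomial (Fin 2) ℂ) = ((216:ℕ) : MvPolynomial (Fin 2) ℂ) * C ((1:ℂ)/625) := by
    rw [show (216:ℂ)/625 = ((216:ℕ):ℂ)/625 by norm_num]; exact key 216
  have h6 : (C ((216:ℂ) / 125) : MvPolynomial (Fin 2) ℂ) = ((1080:ℕ) : MvPolynomial (Fin 2) ℂ) * C ((1:ℂ)/625) := by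
    rw [show (216:ℂ)/125 = ((1080:ℕ):ℂ)/625 by norm_num]; exact key 1080
  have hu : ((625:ℕ) : MvPolynomial (Fin 2) ℂ) * C ((1:ℂ)/625) = 1 := by
    rw [← key 625]; norm_num
  simp only [map_add, pderiv_pow, pderiv_X_self, pderiv_X_of_ne (by decide : (1:Fin 2) ≠ 0),
    pderiv_X_of_ne (by decide : (0:Fin 2) ≠ 1)]
  rw [h1, h2, h3, h4, h5, h6]
  push_cast
  linear_combination ((X 1:MvPolynomial (Fin 2) ℂ) ^ 5 + X 0 ^ 5 + X 0 ^ 6) * X 1 * hu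
end
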